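/- arXiv:1605.01935 — 3 statements merged into one kernel-verified Lean document; each statement's English description precedes it below -/
import Mathlib

section
/- Let f_a : [0,∞) → ℝ solve f_a(0)=0, f_a'(0)=1, f_a'' = a²·f_a, where a : [0,∞) → [0,∞) is smooth, a(t)=0 for t ∈ [0,T₀], and a(t) ≥ √(φ(φ-1))/t for t ≥ T₁ with φ > 1. Then there exists c > 0 such that f_a(t) ≥ c·t^φ for all t ≥ T₁. -/
open Real

lemma aux0 (h h' h'' : ℝ → ℝ) (x₀ : ℝ)
    (hd : ∀ t ∈ Set.Ici x₀, HasDerivAt h (h' t) t)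
    (hd2 : ∀ t ∈ Set.Ici x₀, HasDerivAt h' (h'' t) t)
    (h0 : 0 ≤ h x₀) (h1 : 0 < h' x₀)
    (H : ∀ t ≥ x₀, 0 < h t → 0 ≤ h'' t) :
    ∀ t ≥ x₀, h' x₀ ≤ h' t ∧ h x₀ + h' x₀ * (t - x₀) ≤ h t := by
  open Set in
  -- continuity facts
  have hcont : ContinuousOn h (Ici x₀) := fun t ht => ((hd t ht).continuousAt).continuousWithinAt
  have hcont' : ContinuousOn h' (Ici x₀) := fun t ht => ((hd2 t ht).continuousAt).continuousWithinAt
  -- deriv identifications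
  have hderiv : ∀ t ∈ Ici x₀, deriv h t = h' t := fun t ht => (hd t ht).deriv
  have hderiv' : ∀ t ∈ Ici x₀, deriv h' t = h'' t := fun t ht => (hd2 t ht).deriv
  -- local positivity of h'
  have hc'at : ContinuousAt h' x₀ := (hd2 x₀ self_mem_Ici).continuousAt
  have hev : ∀ᶠ s in nhds x₀, 0 < h' s := hc'at (Ioi_mem_nhds h1)
  obtain ⟨δ, hδpos, hball⟩ := Metric.eventually_nhds_iff.mp hev
  set δ' := δ / 2 with hδ'
  have hδ'pos : 0 < δ' := by positivity
  have hball' : ∀ s ∈ Icc x₀ (x₀ + δ'), 0 < h' s := by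
    intro s hs
    apply hball
    rw [Real.dist_eq, abs_lt]
    constructor <;> [linarith [hs.1]; linarith [hs.2, hδpos]]
  have hsm : StrictMonoOn h (Icc x₀ (x₀ + δ')) := by
    apply strictMonoOn_of_deriv_pos (convex_Icc _ _)
        (hcont.mono (Icc_subset_Ici_self))
    intro x hx
    rw [interior_Icc] at hx
    rw [hderiv x (le_of_lt hx.1)]
    exact hball' x ⟨le_of_lt hx.1, le_of_lt hx.2⟩
  -- main positivity claim
  have pos : ∀ t > x₀, 0 < h t := by
    by_contra hcon
    push_neg at hcon
    obtain ⟨t₁, ht₁, ht₁neg⟩ := hcon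
    set S : Set ℝ := {t | x₀ < t ∧ h t ≤ 0} with hS
    have hSne : S.Nonempty := ⟨t₁, ht₁, ht₁neg⟩
    have hSlb : ∀ t ∈ S, x₀ + δ' ≤ t := by
      intro t ht
      by_contra hlt
      push_neg at hlt
      have : h x₀ < h t := hsm ⟨le_refl _, by linarith⟩ ⟨le_of_lt ht.1, le_of_lt hlt⟩ ht.1
      linarith [ht.2]
    have hbdd : BddBelow S := ⟨x₀ + δ', hSlb⟩
    set m := sInf S with hm
    have hmlb : x₀ + δ' ≤ m := le_csInf hSne hSlb
    have hmx₀ : x₀ < m := by linarith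
    -- h > 0 on (x₀, m)
    have hposlt : ∀ t, x₀ < t → t < m → 0 < h t := by
      intro t ht htm
      by_contra hle
      push_neg at hle
      exact absurd (csInf_le hbdd ⟨ht, hle⟩) (not_le.mpr htm)
    -- h m ≤ 0
    have hmneg : h m ≤ 0 := by
      by_contra hmp
      push_neg at hmp
      have hcm : ContinuousAt h m := (hd m (le_of_lt hmx₀)).continuousAt
      have : ∀ᶠ s in nhds m, 0 < h s := hcm (Ioi_mem_nhds hmp)
      obtain ⟨ε, hεpos, hball2⟩ := Metric.eventually_nhds_iff.mp this
      have : m + ε ≤ m := by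
        apply le_csInf hSne
        intro t ht
        have h1t : m ≤ t := csInf_le hbdd ht
        by_contra hlt
        push_neg at hlt
        have : 0 < h t := by
          apply hball2
          rw [Real.dist_eq, abs_lt]
          constructor <;> linarith
        linarith [ht.2]
      linarith
    -- h' monotone on [x₀, m]
    have hmono' : MonotoneOn h' (Icc x₀ m) := by
      apply monotoneOn_of_deriv_nonneg (convex_Icc _ _)
          (hcont'.mono Icc_subset_Ici_self)
      · intro x hx
        rw [interior_Icc] at hx
        exact ((hd2 x (le_of_lt hx.1)).differentiableAt).differentiableWithinAt
      · intro x hx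
        rw [interior_Icc] at hx
        rw [hderiv' x (le_of_lt hx.1)]
        exact H x (le_of_lt hx.1) (hposlt x hx.1 hx.2)
    have h'pos : ∀ x ∈ Icc x₀ m, 0 < h' x := by
      intro x hx
      calc 0 < h' x₀ := h1
        _ ≤ h' x := hmono' (left_mem_Icc.mpr (le_of_lt hmx₀)) hx hx.1
    have hsm2 : StrictMonoOn h (Icc x₀ m) := by
      apply strictMonoOn_of_deriv_pos (convex_Icc _ _)
          (hcont.mono Icc_subset_Ici_self)
      intro x hx
      rw [interior_Icc] at hx
      rw [hderiv x (le_of_lt hx.1)]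
      exact h'pos x ⟨le_of_lt hx.1, le_of_lt hx.2⟩
    have : h x₀ < h m := hsm2 (left_mem_Icc.mpr (le_of_lt hmx₀))
        (right_mem_Icc.mpr (le_of_lt hmx₀)) hmx₀
    linarith
  -- now on Ici x₀ : h' monotone
  have hmono' : MonotoneOn h' (Ici x₀) := by
    apply monotoneOn_of_deriv_nonneg (convex_Ici _) hcont'
    · intro x hx
      rw [interior_Ici] at hx
      exact ((hd2 x (le_of_lt (Set.mem_Ioi.mp hx))).differentiableAt).differentiableWithinAt
    · intro x hx
      rw [interior_Ici] at hx
      rw [hderiv' x (le_of_lt (Set.mem_Ioi.mp hx))]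
      exact H x (le_of_lt (Set.mem_Ioi.mp hx)) (pos x hx)
  intro t ht
  have h't : h' x₀ ≤ h' t := hmono' self_mem_Ici ht ht
  refine ⟨h't, ?_⟩
  -- h t - h' x₀ * t is monotone on Ici x₀
  have hmono2 : MonotoneOn (fun t => h t - h' x₀ * t) (Ici x₀) := by
    apply monotoneOn_of_deriv_nonneg (convex_Ici _)
        (hcont.sub ((continuous_const.mul continuous_id').continuousOn))
    · intro x hx
      rw [interior_Ici] at hx
      exact (((hd x (le_of_lt (Set.mem_Ioi.mp hx))).differentiableAt).sub
        ((differentiableAt_id.const_mul _))).differentiableWithinAt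
    · intro x hx
      rw [interior_Ici] at hx
      have : HasDerivAt (fun t => h t - h' x₀ * t) (h' x - h' x₀ * 1)  x :=
        (hd x (le_of_lt (Set.mem_Ioi.mp hx))).sub ((hasDerivAt_id x).const_mul _)
      rw [show (h - (fun x => h' x₀) * fun x => x) = (fun t => h t - h' x₀ * t) from rfl, this.deriv]
      have := hmono' self_mem_Ici (le_of_lt (Set.mem_Ioi.mp hx) : x ∈ Ici x₀) (le_of_lt (Set.mem_Ioi.mp hx))
      linarith
  have := hmono2 self_mem_Ici ht ht
  simp only at this
  linarith

theorem stmt0 (a f : ℝ → ℝ) (T₀ T₁ φ : ℝ)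
    (hT₀ : 0 < T₀) (hT : T₀ < T₁) (hφ : 1 < φ)
    (ha_smooth : ContDiff ℝ (⊤ : ℕ∞) a)
    (ha_nonneg : ∀ t ≥ (0:ℝ), 0 ≤ a t)
    (ha_zero : ∀ t ∈ Set.Icc (0:ℝ) T₀, a t = 0)
    (ha_lower : ∀ t ≥ T₁, a t ≥ Real.sqrt (φ * (φ - 1)) / t)
    (hf_smooth : ContDiff ℝ 2 f)
    (hf0 : f 0 = 0) (hf1 : deriv f 0 = 1)
    (hode : ∀ t ≥ (0:ℝ), deriv (deriv f) t = (a t) ^ 2 * f t) :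
    ∃ c > (0:ℝ), ∀ t ≥ T₁, f t ≥ c * t ^ φ := by
  have hT₁pos : 0 < T₁ := lt_trans hT₀ hT
  -- differentiability of f and deriv f
  have h2 : ContDiff ℝ ((1:ℕ) + 1) f := by exact_mod_cast hf_smooth
  obtain ⟨hdf, -, hcd1⟩ := contDiff_succ_iff_deriv.mp h2
  have hdf' : Differentiable ℝ (deriv f) := hcd1.differentiable (by simp)
  -- first application of aux0: f t ≥ t, deriv f t ≥ 1 on [0, ∞)
  have A := aux0 f (deriv f) (deriv (deriv f)) 0
    (fun t _ => (hdf t).hasDerivAt) (fun t _ => (hdf' t).hasDerivAt)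
    (by rw [hf0]) (by rw [hf1]; norm_num)
    (by
      intro t ht hft
      rw [hode t ht]
      positivity)
  have hfT₁ : T₁ ≤ f T₁ := by
    have := (A T₁ (le_of_lt hT₁pos)).2
    rw [hf0, hf1] at this
    linarith
  have h'T₁ : 1 ≤ deriv f T₁ := by
    have := (A T₁ (le_of_lt hT₁pos)).1
    rw [hf1] at this
    linarith
  -- choose c
  have hrp : 0 < T₁ ^ φ := Real.rpow_pos_of_pos hT₁pos φ
  have hrp1 : 0 < T₁ ^ (φ - 1) := Real.rpow_pos_of_pos hT₁pos (φ - 1)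
  set c := min (f T₁ / (2 * T₁ ^ φ)) (deriv f T₁ / (2 * (φ * T₁ ^ (φ - 1)))) with hc
  have hφpos : 0 < φ := by linarith
  have hcpos : 0 < c := by
    apply lt_min
    · exact div_pos (by linarith) (by positivity)
    · exact div_pos (by linarith) (by positivity)
  have hc1 : c * T₁ ^ φ ≤ f T₁ / 2 := by
    have h := min_le_left (f T₁ / (2 * T₁ ^ φ)) (deriv f T₁ / (2 * (φ * T₁ ^ (φ - 1))))
    rw [← hc] at h
    calc c * T₁ ^ φ ≤ f T₁ / (2 * T₁ ^ φ) * T₁ ^ φ := by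
          apply mul_le_mul_of_nonneg_right h (le_of_lt hrp)
      _ = f T₁ / 2 := by field_simp
  have hc2 : c * (φ * T₁ ^ (φ - 1)) ≤ deriv f T₁ / 2 := by
    have h := min_le_right (f T₁ / (2 * T₁ ^ φ)) (deriv f T₁ / (2 * (φ * T₁ ^ (φ - 1))))
    rw [← hc] at h
    calc c * (φ * T₁ ^ (φ - 1)) ≤ deriv f T₁ / (2 * (φ * T₁ ^ (φ - 1))) * (φ * T₁ ^ (φ - 1)) := by
          apply mul_le_mul_of_nonneg_right h (by positivity)
      _ = deriv f T₁ / 2 := by field_simp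
  -- comparison function
  have B := aux0 (fun t => f t - c * t ^ φ)
    (fun t => deriv f t - c * (φ * t ^ (φ - 1)))
    (fun t => deriv (deriv f) t - c * (φ * ((φ - 1) * t ^ (φ - 1 - 1)))) T₁
    (by
      intro t ht
      have ht0 : (0:ℝ) < t := lt_of_lt_of_le hT₁pos ht
      exact ((hdf t).hasDerivAt).sub
        ((Real.hasDerivAt_rpow_const (Or.inl (ne_of_gt ht0))).const_mul c))
    (by
      intro t ht
      have ht0 : (0:ℝ) < t := lt_of_lt_of_le hT₁pos ht
      have h1 : HasDerivAt (fun s : ℝ => s ^ (φ - 1)) ((φ - 1) * t ^ (φ - 1 - 1)) t :=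
        Real.hasDerivAt_rpow_const (Or.inl (ne_of_gt ht0))
      exact ((hdf' t).hasDerivAt).sub (((h1.const_mul φ).const_mul c)))
    (by
      nlinarith [hfT₁, hc1, hT₁pos])
    (by
      nlinarith [h'T₁, hc2])
    (by
      intro t ht hgt
      have ht0 : (0:ℝ) < t := lt_of_lt_of_le hT₁pos ht
      rw [hode t (le_of_lt ht0)]
      have hat := ha_lower t ht
      have hφφ : (0:ℝ) ≤ φ * (φ - 1) := by nlinarith
      have ha2 : φ * (φ - 1) / t ^ 2 ≤ (a t) ^ 2 := by
        have hsq : (Real.sqrt (φ * (φ - 1)) / t) ^ 2 ≤ (a t) ^ 2 := by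
          apply pow_le_pow_left₀ (by positivity) hat
        rw [div_pow, Real.sq_sqrt hφφ] at hsq
        exact hsq
      have htp : (0:ℝ) < t ^ φ := Real.rpow_pos_of_pos ht0 φ
      have hexp : t ^ (φ - 1 - 1) = t ^ φ / t ^ 2 := by
        rw [show φ - 1 - 1 = φ - (2:ℝ) by ring, Real.rpow_sub ht0, Real.rpow_two]
      rw [hexp]
      have hft : c * t ^ φ < f t := by linarith
      have ha0 : (0:ℝ) ≤ (a t) ^ 2 := sq_nonneg _
      have ht2 : (0:ℝ) < t ^ 2 := by positivity
      -- c * (φ * ((φ-1) * (t^φ / t^2))) ≤ (a t)^2 * f t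
      have key : c * t ^ φ * (φ * (φ - 1) / t ^ 2) ≤ (a t) ^ 2 * f t := by
        calc c * t ^ φ * (φ * (φ - 1) / t ^ 2) ≤ c * t ^ φ * (a t) ^ 2 := by
              apply mul_le_mul_of_nonneg_left ha2 (by positivity)
          _ ≤ f t * (a t) ^ 2 := by
              apply mul_le_mul_of_nonneg_right (le_of_lt hft) ha0
          _ = (a t) ^ 2 * f t := by ring
      have : c * (φ * ((φ - 1) * (t ^ φ / t ^ 2))) = c * t ^ φ * (φ * (φ - 1) / t ^ 2) := by
        field_simp
      rw [this]
      linarith)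
  refine ⟨c, hcpos, ?_⟩
  intro t ht
  have hB := (B t ht).2
  have hmul : 0 ≤ (deriv f T₁ - c * (φ * T₁ ^ (φ - 1))) * (t - T₁) :=
    mul_nonneg (by linarith) (by linarith)
  have : 0 ≤ f t - c * t ^ φ := by linarith
  linarith
end

section
/- Let f_a : [0,∞) → ℝ solve f_a(0)=0, f_a'(0)=1, f_a''=a²f_a with a smooth nonnegative, a(t)=0 on [0,T₀], and a(t) ≥ √(φ(φ-1))/t for t ≥ T₁ with φ > 1, and let n ≥ 2. Then ∫₁^∞ f_a(r)^{-(n-1)} dr < ∞. -/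
open Real MeasureTheory

set_option maxHeartbeats 1000000 in
theorem stmt1 (a f : ℝ → ℝ) (T₀ T₁ φ : ℝ) (n : ℕ)
    (hn : 2 ≤ n)
    (hT₀ : 0 < T₀) (hT : T₀ < T₁) (hφ : 1 < φ)
    (ha_smooth : ContDiff ℝ (⊤ : ℕ∞) a)
    (ha_nonneg : ∀ t ≥ (0:ℝ), 0 ≤ a t)
    (ha_zero : ∀ t ∈ Set.Icc (0:ℝ) T₀, a t = 0)
    (ha_lower : ∀ t ≥ T₁, a t ≥ Real.sqrt (φ * (φ - 1)) / t)
    (hf_smooth : ContDiff ℝ 2 f)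
    (hf0 : f 0 = 0) (hf1 : deriv f 0 = 1)
    (hode : ∀ t ≥ (0:ℝ), deriv (deriv f) t = (a t) ^ 2 * f t) :
    IntegrableOn (fun r => 1 / (f r) ^ (n - 1)) (Set.Ici (1:ℝ)) := by
  -- basic regularity
  have hfdiff : Differentiable ℝ f := hf_smooth.differentiable (by norm_num)
  have hreg : Differentiable ℝ (deriv f) ∧ Continuous (deriv (deriv f)) := by
    have h : ContDiff ℝ (1+1 : ℕ) f := by exact_mod_cast hf_smooth
    rw [show ((1+1:ℕ) : WithTop ℕ∞) = (1:WithTop ℕ∞)+1 by norm_num] at h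
    have h2 := (contDiff_succ_iff_deriv.mp h).2.2
    exact ⟨h2.differentiable one_ne_zero, h2.continuous_deriv le_rfl⟩
  obtain ⟨hfd1, hcont2⟩ := hreg
  have hfc : Continuous f := hfdiff.continuous
  have hfc1 : Continuous (deriv f) := hfd1.continuous
  -- deriv f = 1 on [0, T₀]
  have hD1const : ∀ t ∈ Set.Icc (0:ℝ) T₀, deriv f t = 1 := by
    have hmono : MonotoneOn (deriv f) (Set.Icc 0 T₀) := by
      apply monotoneOn_of_hasDerivWithinAt_nonneg (f' := deriv (deriv f))
        (convex_Icc _ _) hfc1.continuousOn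
      · intro x hx
        exact ((hfd1 x).hasDerivAt.hasDerivWithinAt)
      · intro x hx
        rw [interior_Icc] at hx
        rw [hode x (le_of_lt hx.1), ha_zero x ⟨le_of_lt hx.1, le_of_lt hx.2⟩]
        simp
    have hanti : AntitoneOn (deriv f) (Set.Icc 0 T₀) := by
      apply antitoneOn_of_hasDerivWithinAt_nonpos (f' := deriv (deriv f))
        (convex_Icc _ _) hfc1.continuousOn
      · intro x hx
        exact ((hfd1 x).hasDerivAt.hasDerivWithinAt)
      · intro x hx
        rw [interior_Icc] at hx
        rw [hode x (le_of_lt hx.1), ha_zero x ⟨le_of_lt hx.1, le_of_lt hx.2⟩]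
        simp
    intro t ht
    have h0 : (0:ℝ) ∈ Set.Icc (0:ℝ) T₀ := ⟨le_refl _, le_of_lt hT₀⟩
    have := hmono h0 ht ht.1
    have := hanti h0 ht ht.1
    linarith [hmono h0 ht ht.1, hanti h0 ht ht.1]
  -- f t = t on [0, T₀]
  have hfid : ∀ t ∈ Set.Icc (0:ℝ) T₀, f t = t := by
    have hmono : MonotoneOn (fun t => f t - t) (Set.Icc 0 T₀) := by
      apply monotoneOn_of_hasDerivWithinAt_nonneg (f' := fun t => deriv f t - 1)
        (convex_Icc _ _) (hfc.sub continuous_id).continuousOn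
      · intro x hx
        exact (((hfdiff x).hasDerivAt).sub (hasDerivAt_id x)).hasDerivWithinAt
      · intro x hx
        rw [interior_Icc] at hx
        rw [hD1const x ⟨le_of_lt hx.1, le_of_lt hx.2⟩]; simp
    have hanti : AntitoneOn (fun t => f t - t) (Set.Icc 0 T₀) := by
      apply antitoneOn_of_hasDerivWithinAt_nonpos (f' := fun t => deriv f t - 1)
        (convex_Icc _ _) (hfc.sub continuous_id).continuousOn
      · intro x hx
        exact (((hfdiff x).hasDerivAt).sub (hasDerivAt_id x)).hasDerivWithinAt
      · intro x hx
        rw [interior_Icc] at hx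
        rw [hD1const x ⟨le_of_lt hx.1, le_of_lt hx.2⟩]; simp
    intro t ht
    have h0 : (0:ℝ) ∈ Set.Icc (0:ℝ) T₀ := ⟨le_refl _, le_of_lt hT₀⟩
    have h1 := hmono h0 ht ht.1
    have h2 := hanti h0 ht ht.1
    simp only [hf0] at h1 h2
    linarith
  -- positivity for t ≥ T₀
  have hpos : ∀ t ≥ T₀, 0 < f t := by
    by_contra hcon
    push_neg at hcon
    obtain ⟨t₂, ht₂, hft₂⟩ := hcon
    set B : Set ℝ := {t | T₀ ≤ t ∧ f t ≤ 0} with hB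
    have hne : B.Nonempty := ⟨t₂, ht₂, hft₂⟩
    have hbdd : BddBelow B := ⟨T₀, fun x hx => hx.1⟩
    have hclosed : IsClosed B := by
      have : B = Set.Ici T₀ ∩ f ⁻¹' (Set.Iic 0) := by
        ext x; simp [hB, Set.mem_Ici, Set.mem_Iic]
      rw [this]
      exact isClosed_Ici.inter (isClosed_Iic.preimage hfc)
    set s := sInf B with hs
    have hsB : s ∈ B := hclosed.csInf_mem hne hbdd
    have hsge : T₀ ≤ s := hsB.1
    have hfT₀ : f T₀ = T₀ := hfid T₀ ⟨le_of_lt hT₀, le_refl _⟩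
    have hsne : T₀ < s := by
      rcases eq_or_lt_of_le hsge with h | h
      · exfalso; have := hsB.2; rw [← h, hfT₀] at this; linarith
      · exact h
    have hfpos' : ∀ x ∈ Set.Ico T₀ s, 0 < f x := by
      intro x hx
      by_contra hneg
      push_neg at hneg
      have : x ∈ B := ⟨hx.1, hneg⟩
      have := csInf_le hbdd this
      exact absurd this (not_le.mpr hx.2)
    -- deriv f monotone on [T₀, s]
    have hDmono : MonotoneOn (deriv f) (Set.Icc T₀ s) := by
      apply monotoneOn_of_hasDerivWithinAt_nonneg (f' := deriv (deriv f))
        (convex_Icc _ _) hfc1.continuousOn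
      · intro x hx; exact (hfd1 x).hasDerivAt.hasDerivWithinAt
      · intro x hx
        rw [interior_Icc] at hx
        rw [hode x (by linarith [hx.1])]
        have := hfpos' x ⟨le_of_lt hx.1, hx.2⟩
        positivity
    have hD1T₀ : deriv f T₀ = 1 := hD1const T₀ ⟨le_of_lt hT₀, le_refl _⟩
    have hfmono : MonotoneOn f (Set.Icc T₀ s) := by
      apply monotoneOn_of_hasDerivWithinAt_nonneg (f' := deriv f)
        (convex_Icc _ _) hfc.continuousOn
      · intro x hx; exact (hfdiff x).hasDerivAt.hasDerivWithinAt
      · intro x hx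
        rw [interior_Icc] at hx
        have := hDmono ⟨le_refl _, le_of_lt hsne⟩ ⟨le_of_lt hx.1, le_of_lt hx.2⟩ (le_of_lt hx.1)
        rw [hD1T₀] at this
        linarith
    have := hfmono ⟨le_refl _, le_of_lt hsne⟩ ⟨le_of_lt hsne, le_refl _⟩ (le_of_lt hsne)
    rw [hfT₀] at this
    linarith [hsB.2]
  have hposall : ∀ t > (0:ℝ), 0 < f t := by
    intro t ht
    rcases le_or_gt t T₀ with h | h
    · rw [hfid t ⟨le_of_lt ht, h⟩]; exact ht
    · exact hpos t (le_of_lt h)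
  -- f'' ≥ 0 on [0,∞)
  have hD2nonneg : ∀ t ≥ (0:ℝ), 0 ≤ deriv (deriv f) t := by
    intro t ht
    rw [hode t ht]
    rcases eq_or_lt_of_le ht with h | h
    · rw [← h, hf0]; simp
    · have := hposall t h; positivity
  -- deriv f monotone on [0,∞), ≥ 1
  have hDmono : MonotoneOn (deriv f) (Set.Ici 0) := by
    apply monotoneOn_of_hasDerivWithinAt_nonneg (f' := deriv (deriv f))
      (convex_Ici _) hfc1.continuousOn
    · intro x hx; exact (hfd1 x).hasDerivAt.hasDerivWithinAt
    · intro x hx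
      rw [interior_Ici] at hx
      exact hD2nonneg x (le_of_lt hx)
  have hD1 : ∀ t ≥ (0:ℝ), 1 ≤ deriv f t := by
    intro t ht
    have := hDmono (Set.self_mem_Ici) ht ht
    rwa [hf1] at this
  -- f t ≥ t
  have hfge : ∀ t ≥ (0:ℝ), t ≤ f t := by
    have hmono : MonotoneOn (fun t => f t - t) (Set.Ici 0) := by
      apply monotoneOn_of_hasDerivWithinAt_nonneg (f' := fun t => deriv f t - 1)
        (convex_Ici _) (hfc.sub continuous_id).continuousOn
      · intro x hx; exact (((hfdiff x).hasDerivAt).sub (hasDerivAt_id x)).hasDerivWithinAt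
      · intro x hx
        rw [interior_Ici] at hx
        linarith [hD1 x (le_of_lt hx)]
    intro t ht
    have := hmono Set.self_mem_Ici ht ht
    simp only [hf0] at this
    linarith
  -- f t ≤ t * deriv f t
  have hkey : ∀ t ≥ (0:ℝ), f t ≤ t * deriv f t := by
    have hmono : MonotoneOn (fun t => t * deriv f t - f t) (Set.Ici 0) := by
      apply monotoneOn_of_hasDerivWithinAt_nonneg
        (f' := fun t => t * deriv (deriv f) t)
        (convex_Ici _) ((continuous_id.mul hfc1).sub hfc).continuousOn
      · intro x hx
        have h1 : HasDerivAt (fun t => t * deriv f t) (1 * deriv f x + x * deriv (deriv f) x) x :=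
          (hasDerivAt_id x).mul (hfd1 x).hasDerivAt
        have h2 := h1.sub (hfdiff x).hasDerivAt
        have : (1 * deriv f x + x * deriv (deriv f) x - deriv f x) = x * deriv (deriv f) x := by ring
        rw [this] at h2
        exact h2.hasDerivWithinAt
      · intro x hx
        rw [interior_Ici] at hx
        exact mul_nonneg (le_of_lt hx) (hD2nonneg x (le_of_lt hx))
    intro t ht
    have := hmono Set.self_mem_Ici ht ht
    simp only [hf0] at this
    nlinarith [this]

  have hT₁pos : 0 < T₁ := lt_trans hT₀ hT
  set κ : ℝ := (1+φ)/2 with hκdef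
  set c : ℝ := φ*(φ-1)/2 with hcdef
  have hκ1 : 1 < κ := by rw [hκdef]; linarith
  have hκφ : κ < φ := by rw [hκdef]; linarith
  have hc : 0 < c := by rw [hcdef]; nlinarith
  set T₂ : ℝ := T₁ * Real.exp (κ/c) with hT₂def
  have hT₂gt : T₁ < T₂ := by
    rw [hT₂def]
    have h1 : 1 < Real.exp (κ/c) := by
      have := Real.add_one_le_exp (κ/c)
      have : 0 < κ/c := by positivity
      nlinarith [Real.add_one_le_exp (κ/c)]
    nlinarith
  have halow : ∀ t ≥ T₁, φ*(φ-1) ≤ (a t)^2 * t^2 := by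
    intro t ht
    have htpos : 0 < t := lt_of_lt_of_le hT₁pos ht
    have h1 := ha_lower t ht
    have h2 : Real.sqrt (φ*(φ-1)) ≤ a t * t := by
      rw [ge_iff_le, div_le_iff₀ htpos] at h1; exact h1
    have h3 : 0 ≤ φ*(φ-1) := by nlinarith
    nlinarith [Real.sq_sqrt h3, Real.sqrt_nonneg (φ*(φ-1))]
  -- the crossing
  have hcross : ∃ s₀ ∈ Set.Icc T₁ T₂, κ * f s₀ ≤ s₀ * deriv f s₀ := by
    by_contra hcon
    push_neg at hcon
    set F : ℝ → ℝ := fun s => s * deriv f s / f s - c * Real.log s with hF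
    have hmono : MonotoneOn F (Set.Icc T₁ T₂) := by
      apply monotoneOn_of_hasDerivWithinAt_nonneg
        (f' := fun x => ((1 * deriv f x + x * deriv (deriv f) x) * f x
          - x * deriv f x * deriv f x) / (f x)^2 - c * x⁻¹)
        (convex_Icc _ _)
      · apply ContinuousOn.sub
        · exact (continuousOn_id.mul hfc1.continuousOn).div hfc.continuousOn
            (fun x hx => ne_of_gt (hposall x (lt_of_lt_of_le hT₁pos hx.1)))
        · exact continuousOn_const.mul (Real.continuousOn_log.mono
            (fun x hx => ne_of_gt (lt_of_lt_of_le hT₁pos hx.1)))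
      · intro x hx
        rw [interior_Icc] at hx
        have hxpos : 0 < x := lt_of_lt_of_le hT₁pos (le_of_lt hx.1)
        have h1 : HasDerivAt (fun s => s * deriv f s / f s)
            (((1 * deriv f x + x * deriv (deriv f) x) * f x
              - x * deriv f x * deriv f x) / (f x)^2) x :=
          (((hasDerivAt_id x).mul (hfd1 x).hasDerivAt).div ((hfdiff x).hasDerivAt)
            (ne_of_gt (hposall x hxpos)))
        have h2 : HasDerivAt (fun s => c * Real.log s) (c * x⁻¹) x :=
          (Real.hasDerivAt_log (ne_of_gt hxpos)).const_mul c
        exact (h1.sub h2).hasDerivWithinAt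
      · intro x hx
        rw [interior_Icc] at hx
        have hxT₁ : T₁ ≤ x := le_of_lt hx.1
        have hxpos : 0 < x := lt_of_lt_of_le hT₁pos hxT₁
        have hA : 0 < f x := hposall x hxpos
        have hlt := hcon x ⟨hxT₁, le_of_lt hx.2⟩
        have hub : x * deriv f x < κ * f x := by linarith [hlt]
        have hlb : f x ≤ x * deriv f x := hkey x (le_of_lt hxpos)
        have hB : deriv (deriv f) x = (a x)^2 * f x := hode x (le_of_lt hxpos)
        have ha2 : φ*(φ-1) ≤ (a x)^2 * x^2 := halow x hxT₁
        rw [sub_nonneg, hB]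
        rw [show c * x⁻¹ = c / x by ring, div_le_div_iff₀ hxpos (by positivity : (0:ℝ) < f x ^ 2)]
        -- goal : c * f x ^2 ≤ (... ) * x
        set A := f x
        set D := deriv f x
        have key : c * A^2 ≤ (φ*A - x*D) * (x*D + (φ-1)*A) := by
          have e1 : (φ-κ)*A ≤ φ*A - x*D := by nlinarith
          have e2 : φ*A ≤ x*D + (φ-1)*A := by nlinarith
          have e3 : 0 < (φ-κ)*A := by nlinarith
          have e4 : (0:ℝ) < φ*A := by nlinarith
          have := mul_le_mul e1 e2 (le_of_lt e4) (by nlinarith : 0 ≤ φ*A - x*D)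
          calc c * A^2 = ((φ-κ)*A) * (φ*A) := by rw [hcdef, hκdef]; ring
            _ ≤ (φ*A - x*D) * (x*D + (φ-1)*A) := this
        nlinarith [mul_le_mul_of_nonneg_right ha2 (mul_nonneg (le_of_lt hA) (le_of_lt hA)),
          key]
    have hmem1 : T₁ ∈ Set.Icc T₁ T₂ := ⟨le_refl _, le_of_lt hT₂gt⟩
    have hmem2 : T₂ ∈ Set.Icc T₁ T₂ := ⟨le_of_lt hT₂gt, le_refl _⟩
    have hFle := hmono hmem1 hmem2 (le_of_lt hT₂gt)
    have hlog : Real.log T₂ = Real.log T₁ + κ/c := by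
      rw [hT₂def, Real.log_mul (ne_of_gt hT₁pos) (Real.exp_ne_zero _), Real.log_exp]
    have hwT₁ : 1 ≤ T₁ * deriv f T₁ / f T₁ := by
      have hA := hposall T₁ hT₁pos
      rw [le_div_iff₀ hA, one_mul]
      exact hkey T₁ (le_of_lt hT₁pos)
    have hwT₂ : T₂ * deriv f T₂ / f T₂ < κ := by
      have hA := hposall T₂ (lt_trans hT₁pos hT₂gt)
      rw [div_lt_iff₀ hA]
      exact hcon T₂ hmem2
    have hFle' : T₁ * deriv f T₁ / f T₁ - c * Real.log T₁ ≤
        T₂ * deriv f T₂ / f T₂ - c * Real.log T₂ := hFle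
    rw [hlog, mul_add] at hFle'
    have hck : c * (κ/c) = κ := by field_simp
    rw [hck] at hFle'
    linarith [hwT₁, hwT₂, hFle']
  obtain ⟨s₀, hs₀mem, hs₀⟩ := hcross
  have hs₀T₁ : T₁ ≤ s₀ := hs₀mem.1

  have hs₀pos : 0 < s₀ := lt_of_lt_of_le hT₁pos hs₀T₁
  have hκκ : κ*(κ-1) ≤ φ*(φ-1) := by nlinarith
  set W : ℝ → ℝ := fun t => deriv f t * t ^ κ - κ * f t * t ^ (κ-1) with hW
  have hWmono : MonotoneOn W (Set.Ici s₀) := by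
    apply monotoneOn_of_hasDerivWithinAt_nonneg
      (f' := fun x => deriv (deriv f) x * x ^ κ + deriv f x * (κ * x ^ (κ-1))
        - (κ * deriv f x * x ^ (κ-1) + κ * f x * ((κ-1) * x ^ (κ-1-1))))
      (convex_Ici _)
    · apply ContinuousOn.sub
      · exact hfc1.continuousOn.mul (continuousOn_id.rpow_const
          (fun x hx => Or.inl (ne_of_gt (lt_of_lt_of_le hs₀pos hx))))
      · exact (continuousOn_const.mul hfc.continuousOn).mul (continuousOn_id.rpow_const
          (fun x hx => Or.inl (ne_of_gt (lt_of_lt_of_le hs₀pos hx))))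
    · intro x hx
      rw [interior_Ici] at hx
      have hx0 : 0 < x := lt_trans hs₀pos hx
      have hrp : HasDerivAt (fun t : ℝ => t ^ κ) (κ * x ^ (κ-1)) x :=
        Real.hasDerivAt_rpow_const (Or.inl (ne_of_gt hx0))
      have hrp2 : HasDerivAt (fun t : ℝ => t ^ (κ-1)) ((κ-1) * x ^ (κ-1-1)) x :=
        Real.hasDerivAt_rpow_const (Or.inl (ne_of_gt hx0))
      have h1 := (hfd1 x).hasDerivAt.mul hrp
      have h2 := (((hfdiff x).hasDerivAt).const_mul κ).mul hrp2
      exact (h1.sub h2).hasDerivWithinAt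
    · intro x hx
      rw [interior_Ici] at hx
      have hx0 : 0 < x := lt_trans hs₀pos hx
      have hB : deriv (deriv f) x = (a x)^2 * f x := hode x (le_of_lt hx0)
      have hsplit : x ^ κ = x ^ (κ-2) * x^2 := by
        rw [← Real.rpow_natCast x 2, ← Real.rpow_add hx0]
        norm_num
      have he : κ - 1 - 1 = κ - 2 := by ring
      rw [hB, he, hsplit]
      have hfx : 0 ≤ f x := le_of_lt (hposall x hx0)
      have hxp : 0 ≤ x ^ (κ-2) := le_of_lt (Real.rpow_pos_of_pos hx0 _)
      have ha2 : κ*(κ-1) ≤ (a x)^2 * x^2 := le_trans hκκ (halow x (le_trans hs₀T₁ (le_of_lt hx)))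
      nlinarith [mul_nonneg (mul_nonneg hfx hxp) (sub_nonneg.mpr ha2)]
  have hW0 : 0 ≤ W s₀ := by
    have hpow : s₀ ^ κ = s₀ ^ (κ-1) * s₀ := by
      rw [show κ = κ-1+1 by ring, Real.rpow_add_one (ne_of_gt hs₀pos)]
      ring_nf
    rw [hW]
    simp only [hpow]
    have := Real.rpow_pos_of_pos hs₀pos (κ-1)
    nlinarith
  have hWnonneg : ∀ t ≥ s₀, 0 ≤ W t := fun t ht =>
    le_trans hW0 (hWmono Set.self_mem_Ici ht ht)
  -- f t / t^κ monotone
  have hHmono : MonotoneOn (fun t => f t / t ^ κ) (Set.Ici s₀) := by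
    apply monotoneOn_of_hasDerivWithinAt_nonneg
      (f' := fun x => (deriv f x * x ^ κ - f x * (κ * x ^ (κ-1))) / (x ^ κ)^2)
      (convex_Ici _)
    · exact hfc.continuousOn.div (continuousOn_id.rpow_const
        (fun x hx => Or.inl (ne_of_gt (lt_of_lt_of_le hs₀pos hx))))
        (fun x hx => ne_of_gt (Real.rpow_pos_of_pos (lt_of_lt_of_le hs₀pos hx) κ))
    · intro x hx
      rw [interior_Ici] at hx
      have hx0 : 0 < x := lt_trans hs₀pos hx
      have hrp : HasDerivAt (fun t : ℝ => t ^ κ) (κ * x ^ (κ-1)) x :=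
        Real.hasDerivAt_rpow_const (Or.inl (ne_of_gt hx0))
      exact (((hfdiff x).hasDerivAt).div hrp
        (ne_of_gt (Real.rpow_pos_of_pos hx0 κ))).hasDerivWithinAt
    · intro x hx
      rw [interior_Ici] at hx
      apply div_nonneg _ (sq_nonneg _)
      have := hWnonneg x (le_of_lt hx)
      simp only [hW] at this
      have e : f x * (κ * x ^ (κ-1)) = κ * f x * x ^ (κ-1) := by ring
      rw [e]
      linarith
  set ε : ℝ := f s₀ / s₀ ^ κ with hε
  have hεpos : 0 < ε := div_pos (hposall s₀ hs₀pos) (Real.rpow_pos_of_pos hs₀pos κ)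
  have hgrow : ∀ t ≥ s₀, ε * t ^ κ ≤ f t := by
    intro t ht
    have h1 := hHmono Set.self_mem_Ici ht ht
    have h2 : 0 < t ^ κ := Real.rpow_pos_of_pos (lt_of_lt_of_le hs₀pos ht) κ
    rw [hε]
    calc f s₀ / s₀ ^ κ * t ^ κ ≤ f t / t ^ κ * t ^ κ := by
          apply mul_le_mul_of_nonneg_right h1 (le_of_lt h2)
      _ = f t := by field_simp
  -- integrability
  set T₃ : ℝ := max s₀ 1 with hT₃
  have hT₃1 : (1:ℝ) ≤ T₃ := le_max_right _ _
  have hT₃s₀ : s₀ ≤ T₃ := le_max_left _ _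
  have hT₃pos : 0 < T₃ := lt_of_lt_of_le hs₀pos hT₃s₀
  have hsub : Set.Ici (1:ℝ) ⊆ Set.Icc 1 T₃ ∪ Set.Ici T₃ := by
    intro x hx
    rcases le_total x T₃ with h | h
    · exact Or.inl ⟨hx, h⟩
    · exact Or.inr h
  apply IntegrableOn.mono_set _ hsub
  apply IntegrableOn.union
  · apply ContinuousOn.integrableOn_Icc
    apply continuousOn_const.div ((hfc.pow _).continuousOn)
    intro x hx
    exact pow_ne_zero _ (ne_of_gt (hposall x (by linarith [hx.1])))
  · have hint : IntegrableOn (fun t : ℝ => ε⁻¹ * t ^ (-κ)) (Set.Ici T₃) := by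
      rw [integrableOn_Ici_iff_integrableOn_Ioi]
      exact (integrableOn_Ioi_rpow_of_lt (by linarith) hT₃pos).const_mul ε⁻¹
    apply Integrable.mono' hint
    · simp only [one_div]
      exact ((hfc.pow (n-1)).measurable.inv).aestronglyMeasurable
    · filter_upwards [ae_restrict_mem measurableSet_Ici] with t ht
      have ht1 : (1:ℝ) ≤ t := le_trans hT₃1 ht
      have hts₀ : s₀ ≤ t := le_trans hT₃s₀ ht
      have h1 : 1 ≤ f t := le_trans ht1 (hfge t (by linarith))
      have h2 : f t ≤ f t ^ (n-1) := le_self_pow₀ h1 (by omega)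
      have h3 : ε * t ^ κ ≤ f t := hgrow t hts₀
      have h4 : 0 < ε * t ^ κ := mul_pos hεpos (Real.rpow_pos_of_pos (by linarith) κ)
      have h5 : 0 < f t ^ (n-1) := by positivity
      rw [Real.norm_eq_abs, abs_of_pos (by positivity)]
      calc 1 / f t ^ (n-1) ≤ 1 / (ε * t ^ κ) :=
            one_div_le_one_div_of_le h4 (le_trans h3 h2)
        _ = ε⁻¹ * t ^ (-κ) := by
            rw [Real.rpow_neg (by linarith : (0:ℝ) ≤ t)]
            field_simp
end

section
/- Let u, φ be smooth functions on a Riemannian manifold with metric σ, W = (1 + |∇w + ∇φ|²)^{1/2} where w = ψ∘d for a C² distance-type function d with |∇d| = 1, ∇d·∇φ = 0 and Hess d(∇d, ·) = 0. Then for the positive-definite matrix a^{ij} = W^{-1}(σ^{ij} - v^i v^j/W²) with v = w + φ, one has a^{ij} w_{i;j} = ψ'(d)·Δd/W + ψ''(d)(1+|∇φ|²)/W³ - ψ'(d)·Hess d(∇φ,∇φ)/W³. -/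
open Real

/-- Key computation of the boundary gradient estimate: with `u₀ = ∇d` (`‖u₀‖ = 1`),
`p = ∇φ` orthogonal to `u₀`, `B = Hess d` symmetric with `B(∇d,·) = 0`, `Δd = tr B`,
`v = ∇w + ∇φ = ψ'·u₀ + p` and `W² = 1 + ψ'² + |∇φ|²`, the contraction
`aⁱʲ w_{i;j} = (1/W)·tr(Hess w) - (1/W³)·Hess w(v,v)`, where
`Hess w = ψ''·dρ⊗dρ + ψ'·B` (so `tr Hess w = ψ'' + ψ'·Δd` and
`Hess w(v,v) = ψ''⟨v,u₀⟩² + ψ'·B(v,v)`), equals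
`ψ'·Δd/W + ψ''(1+|∇φ|²)/W³ - ψ'·B(p,p)/W³`. -/
theorem stmt17 {E : Type*} [NormedAddCommGroup E] [InnerProductSpace ℝ E]
    (u₀ p : E) (hu₀ : ‖u₀‖ = 1) (horth : (inner ℝ u₀ p : ℝ) = 0)
    (B : E →ₗ[ℝ] E →ₗ[ℝ] ℝ) (hBsymm : ∀ X Y, B X Y = B Y X)
    (hBu₀ : B u₀ = 0)
    (Δd ψ' ψ'' W : ℝ) (v : E)
    (hv : v = ψ' • u₀ + p)
    (hW : W = Real.sqrt (1 + ψ' ^ 2 + ‖p‖ ^ 2)) :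
    (1 / W) * (ψ'' + ψ' * Δd)
        - (1 / W ^ 3) * (ψ'' * (inner ℝ v u₀ : ℝ) ^ 2 + ψ' * B v v)
      = ψ' * Δd / W + ψ'' * (1 + ‖p‖ ^ 2) / W ^ 3 - ψ' * B p p / W ^ 3 := by
  have hpos : (0:ℝ) < 1 + ψ' ^ 2 + ‖p‖ ^ 2 := by positivity
  have hW2 : W ^ 2 = 1 + ψ' ^ 2 + ‖p‖ ^ 2 := by
    rw [hW, sq_sqrt hpos.le]
  have hWpos : 0 < W := hW ▸ Real.sqrt_pos.mpr hpos
  have hvin : (inner ℝ v u₀ : ℝ) = ψ' := by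
    have h2 : (inner ℝ p u₀ : ℝ) = 0 := by rw [real_inner_comm]; exact horth
    rw [hv, inner_add_left, real_inner_smul_left, real_inner_self_eq_norm_sq, hu₀, h2]
    ring
  have hBvv : B v v = B p p := by
    simp [hv, map_add, LinearMap.add_apply, hBsymm p u₀, hBu₀]
  rw [hvin, hBvv]
  field_simp
  linear_combination ψ'' * hW2
end
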